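/- Let R be a unital associative algebra over a field F, let q ∈ F, q ∉ {0,1}, and let A, B ∈ R satisfy A·B − q·B·A = 1. Write C = A·B − B·A. Suppose q^p = 1 and {p}_q = 0 for some positive integer p, and let k be a natural number with p dividing k+1 (so C^{k+1} is central). Then [C^k·A, B·C] = C^{k+2}. -/

import Mathlib

/-!
Put `C = AB - BA`. The relation gives `C = 1 + (q - 1) BA`, so `C` commutes with `BA`, and
`AC = q CA`, so `A C^(k+1) = q^(k+1) C^(k+1) A = C^(k+1) A`. Moving `A` across `C^(k+1)` and
`BA` across `C^k` turns `[C^k A, BC]` into `C^k (AB - BA) C = C^(k+2)`.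
-/

section QCommute

variable {F R : Type*} [CommSemiring F] [Semiring R] [Algebra F R] {q : F} {a c : R}

theorem mul_pow_eq_smul_pow_mul (hac : a * c = q • (c * a)) (n : ℕ) :
    a * c ^ n = q ^ n • (c ^ n * a) := by
  induction n with
  | zero => simp
  | succ n ih =>
    rw [pow_succ, ← mul_assoc, ih, smul_mul_assoc, mul_assoc, hac, mul_smul_comm, smul_smul,
      ← pow_succ, ← mul_assoc]

theorem commute_pow_of_mul_eq_smul {n : ℕ} (hac : a * c = q • (c * a)) (hq : q ^ n = 1) :
    Commute a (c ^ n) := by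
  rw [Commute, SemiconjBy, mul_pow_eq_smul_pow_mul hac, hq, one_smul]

end QCommute

section QWeyl

variable {F R : Type*} [CommRing F] [Ring R] [Algebra F R] {q : F} {A B : R}

theorem commutator_eq_one_add_smul (h : A * B - q • (B * A) = 1) :
    A * B - B * A = 1 + (q - 1) • (B * A) := by
  rw [sub_smul, one_smul, ← h]
  abel

theorem commute_commutator_mul_rev (h : A * B - q • (B * A) = 1) :
    Commute (A * B - B * A) (B * A) := by
  rw [commutator_eq_one_add_smul h]
  exact (Commute.one_left _).add_left ((Commute.refl _).smul_left _)

theorem mul_commutator_eq_smul (h : A * B - q • (B * A) = 1) :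
    A * (A * B - B * A) = q • ((A * B - B * A) * A) := by
  -- the difference of the two sides of `key`, expanded, is `A C - q C A`
  have key : A * (A * B - q • (B * A)) = (A * B - q • (B * A)) * A := by rw [h, mul_one, one_mul]
  simp only [mul_sub, sub_mul, mul_smul_comm, smul_mul_assoc, smul_sub, ← mul_assoc] at key ⊢
  rw [← sub_eq_zero] at key ⊢
  rw [← key]
  abel

end QWeyl

theorem comm_CkA_BC_general {F : Type*} [Field F] {R : Type*} [Ring R] [Algebra F R]
    (q : F) (A B : R) (h : A * B - q • (B * A) = 1)
    (p : ℕ) (hqp : q ^ p = 1)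
    (k : ℕ) (hk : p ∣ (k + 1)) :
    ((A * B - B * A) ^ k * A) * (B * (A * B - B * A))
        - (B * (A * B - B * A)) * ((A * B - B * A) ^ k * A)
      = (A * B - B * A) ^ (k + 2) := by
  set C := A * B - B * A with hC
  have hq : q ^ (k + 1) = 1 := by
    obtain ⟨m, hm⟩ := hk
    rw [hm, pow_mul, hqp, one_pow]
  have hA : Commute A (C ^ (k + 1)) := commute_pow_of_mul_eq_smul (mul_commutator_eq_smul h) hq
  have hBA : Commute (C ^ k) (B * A) := (commute_commutator_mul_rev h).pow_left k
  calc C ^ k * A * (B * C) - B * C * (C ^ k * A)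
      = C ^ k * (A * B) * C - B * (C ^ (k + 1) * A) := by rw [pow_succ']; noncomm_ring
    _ = C ^ k * (A * B) * C - B * A * C ^ k * C := by rw [← hA.eq, pow_succ]; noncomm_ring
    _ = C ^ k * (A * B) * C - C ^ k * (B * A) * C := by rw [← hBA.eq]
    _ = C ^ (k + 2) := by rw [← sub_mul, ← mul_sub, ← hC, pow_succ, pow_succ]

theorem comm_CkA_BC {F : Type*} [Field F] {R : Type*} [Ring R] [Algebra F R]
    (q : F) (hq0 : q ≠ 0) (hq1 : q ≠ 1) (A B : R) (h : A * B - q • (B * A) = 1)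
    (p : ℕ) (hp : 0 < p) (hqp : q ^ p = 1)
    (hsum : (∑ i ∈ Finset.range p, q ^ i) = 0)
    (k : ℕ) (hk : p ∣ (k + 1)) :
    ((A * B - B * A) ^ k * A) * (B * (A * B - B * A))
        - (B * (A * B - B * A)) * ((A * B - B * A) ^ k * A)
      = (A * B - B * A) ^ (k + 2) :=
  comm_CkA_BC_general q A B h p hqp k hk
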